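/- arXiv:2501.11443 — 4 statements merged into one kernel-verified Lean document; each statement's English description precedes it below -/
import Mathlib

section
/- For any two distinct rotations R₁, R₂ ∈ SO(3), the rank of R₁ - R₂ is not equal to 1 (in fact it equals 2). -/
open Matrix

lemma aux_rank_one_sub (S : Matrix (Fin 3) (Fin 3) ℝ)
    (hS : Sᵀ * S = 1) (hdS : S.det = 1) (hne : S ≠ 1) :
    (1 - S).rank = 2 := by
  set M : Matrix (Fin 3) (Fin 3) ℝ := 1 - S with hMdef
  have hSM : S = 1 - M := by rw [hMdef, sub_sub_cancel]
  -- det M = 0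
  have hdet0 : M.det = 0 := by
    have h1 : (Sᵀ * M) = Sᵀ - 1 := by
      rw [hMdef, mul_sub, mul_one, hS]
    have h2 : M.det = (Sᵀ - 1).det := by
      rw [← h1, det_mul, det_transpose, hdS, one_mul]
    have h3 : (Sᵀ - 1).det = (S - 1).det := by
      rw [show Sᵀ - 1 = (S - 1)ᵀ by rw [transpose_sub, transpose_one], det_transpose]
    have h4 : (S - 1).det = - M.det := by
      rw [show S - 1 = -M from (neg_sub (1 : Matrix (Fin 3) (Fin 3) ℝ) S).symm, det_neg]
      norm_num
    have := h2.trans (h3.trans h4)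
    linarith
  obtain ⟨v, hv0, hv⟩ := (Matrix.exists_mulVec_eq_zero_iff).2 hdet0
  have hrn := LinearMap.finrank_range_add_finrank_ker M.mulVecLin
  have hpi : Module.finrank ℝ (Fin 3 → ℝ) = 3 := by simp
  rw [hpi] at hrn
  have hker : 1 ≤ Module.finrank ℝ (LinearMap.ker M.mulVecLin) := by
    rw [Nat.one_le_iff_ne_zero]
    intro h
    have hb : LinearMap.ker M.mulVecLin = ⊥ := Submodule.finrank_eq_zero.mp h
    have hv' : v ∈ LinearMap.ker M.mulVecLin := by
      simpa [Matrix.mulVecLin_apply] using hv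
    rw [hb, Submodule.mem_bot] at hv'
    exact hv0 hv'
  have hrank_def : M.rank = Module.finrank ℝ (LinearMap.range M.mulVecLin) := rfl
  have hM0 : M ≠ 0 := by
    intro h
    exact hne (by rw [hSM, h, sub_zero])
  have hr0 : M.rank ≠ 0 := by
    intro h
    apply hM0
    rw [hrank_def] at h
    have hb : LinearMap.range M.mulVecLin = ⊥ := Submodule.finrank_eq_zero.mp h
    have h2 : M.mulVecLin = 0 := LinearMap.range_eq_bot.mp hb
    ext i j
    have h3 : M *ᵥ Pi.single j 1 = 0 := congrFun (congrArg (fun f => f.toFun) h2) _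
    have := congrFun h3 i
    simpa [Matrix.mulVec_single] using this
  have hr1 : M.rank ≠ 1 := by
    intro h
    rw [hrank_def] at h
    obtain ⟨u, hu0, hu⟩ := (finrank_eq_one_iff').mp h
    have hcol : ∀ j : Fin 3, ∃ cj : ℝ, ∀ i, M i j = cj * (u : Fin 3 → ℝ) i := by
      intro j
      have hmem : M *ᵥ Pi.single j 1 ∈ LinearMap.range M.mulVecLin :=
        ⟨Pi.single j 1, rfl⟩
      obtain ⟨cc, hcc⟩ := hu ⟨_, hmem⟩
      refine ⟨cc, fun i => ?_⟩
      have h2 : cc • (u : Fin 3 → ℝ) = M *ᵥ Pi.single j 1 := congrArg Subtype.val hcc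
      have := congrFun h2 i
      simpa [Matrix.mulVec_single] using this.symm
    choose c hc using hcol
    obtain ⟨u0, hu0def⟩ : ∃ u0 : Fin 3 → ℝ, (u : Fin 3 → ℝ) = u0 := ⟨_, rfl⟩
    rw [hu0def] at hc
    have hu0ne : u0 ≠ 0 := fun hz => hu0 (Subtype.ext (hu0def.trans hz))
    obtain ⟨i₀, hi₀⟩ := Function.ne_iff.mp hu0ne
    simp only [Pi.zero_apply] at hi₀
    have hcne : ∃ j, c j ≠ 0 := by
      by_contra hall
      push_neg at hall
      apply hM0
      ext i j
      rw [hc j i, hall j]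
      simp
    obtain ⟨j₀, hj₀⟩ := hcne
    -- orthogonality relation: Mᵀ + M = Mᵀ * M
    have h2m : Mᵀ + M = Mᵀ * M := by
      have h1 : (1 - Mᵀ) * (1 - M) = 1 := by
        rw [show (1 : Matrix (Fin 3) (Fin 3) ℝ) - Mᵀ = Sᵀ by
              rw [hMdef, transpose_sub, transpose_one, sub_sub_cancel],
            ← hSM]
        exact hS
      have hexp : (1 - Mᵀ) * (1 - M) = 1 - Mᵀ - M + Mᵀ * M := by
        noncomm_ring
      rw [hexp] at h1
      have h5 : Mᵀ * M - (Mᵀ + M) = (1 - Mᵀ - M + Mᵀ * M) - 1 := by abel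
      rw [h1, sub_self] at h5
      exact (sub_eq_zero.mp h5).symm
    have heq0 : ∀ i j, c j * u0 i + c i * u0 j = c j * c i * (∑ k, u0 k * u0 k) := by
      intro i j
      have h1 := congrFun (congrFun h2m i) j
      simp only [Matrix.add_apply, Matrix.transpose_apply, Matrix.mul_apply] at h1
      have h2 : ∑ k, M k i * M k j = ∑ k, (c i * u0 k) * (c j * u0 k) :=
        Finset.sum_congr rfl (fun k _ => by rw [hc i k, hc j k])
      have h3 : ∑ k, (c i * u0 k) * (c j * u0 k) = c j * c i * ∑ k, u0 k * u0 k := by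
        rw [Finset.mul_sum]
        exact Finset.sum_congr rfl fun k _ => by ring
      rw [h2, h3, hc i j, hc j i] at h1
      linarith
    obtain ⟨K, hKval, heq⟩ :
        ∃ K : ℝ, K = (∑ k, u0 k * u0 k) ∧
          ∀ i j, c j * u0 i + c i * u0 j = c j * c i * K := ⟨_, rfl, heq0⟩
    obtain ⟨C, hCval⟩ : ∃ C : ℝ, C = ∑ k, c k * c k := ⟨_, rfl⟩
    obtain ⟨t, hut⟩ : ∃ t : ℝ, ∀ i, u0 i = t * c i := by
      refine ⟨(c j₀ * K - u0 j₀) / c j₀, fun i => ?_⟩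
      field_simp
      linear_combination heq i j₀
    have htne : t ≠ 0 := by
      intro hz
      rw [hut i₀, hz, zero_mul] at hi₀
      exact hi₀ rfl
    have hKC : K = t * t * C := by
      rw [hKval, hCval, Finset.mul_sum]
      exact Finset.sum_congr rfl fun k _ => by rw [hut k]; ring
    have htC : t * C = 2 := by
      have hh := heq j₀ j₀
      rw [hut j₀, hKC] at hh
      have hq : (t * C) * (t * (c j₀ * c j₀)) = 2 * (t * (c j₀ * c j₀)) := by
        linear_combination -hh
      exact mul_right_cancel₀ (mul_ne_zero htne (mul_ne_zero hj₀ hj₀)) hq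
    have hSform : S = 1 + replicateCol Unit (fun i => -(t * c i)) * replicateRow Unit c := by
      ext i j
      have hSij : S i j = (1 : Matrix (Fin 3) (Fin 3) ℝ) i j - M i j := by
        rw [hSM, Matrix.sub_apply]
      rw [hSij, hc j i, hut i]
      simp only [Matrix.add_apply, Matrix.mul_apply, Matrix.replicateCol_apply, Matrix.replicateRow_apply,
        Finset.univ_unique, Finset.sum_singleton]
      ring
    have hdot : (c ⬝ᵥ fun i => -(t * c i)) = -(t * C) := by
      simp only [dotProduct, hCval, Finset.mul_sum, ← Finset.sum_neg_distrib]
      exact Finset.sum_congr rfl fun k _ => by ring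
    have hdetS : S.det = 1 + (c ⬝ᵥ fun i => -(t * c i)) := by
      rw [hSform]
      exact det_one_add_replicateCol_mul_replicateRow _ _
    rw [hdS, hdot, htC] at hdetS
    norm_num at hdetS
  omega

/-- For any two distinct rotations `R₁, R₂ ∈ SO(3)`, the rank of `R₁ - R₂` is not `1`
(in fact it equals `2`). -/
theorem rank_sub_of_rotations_ne_one
    (R₁ R₂ : Matrix (Fin 3) (Fin 3) ℝ)
    (h₁ : R₁ ∈ Matrix.specialOrthogonalGroup (Fin 3) ℝ)
    (h₂ : R₂ ∈ Matrix.specialOrthogonalGroup (Fin 3) ℝ)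
    (hne : R₁ ≠ R₂) :
    (R₁ - R₂).rank ≠ 1 ∧ (R₁ - R₂).rank = 2 := by
  rw [Matrix.mem_specialOrthogonalGroup_iff] at h₁ h₂
  obtain ⟨ho₁, hd₁⟩ := h₁
  obtain ⟨ho₂, hd₂⟩ := h₂
  rw [Matrix.mem_orthogonalGroup_iff] at ho₁
  rw [Matrix.mem_orthogonalGroup_iff'] at ho₂
  have hstar₁ : star R₁ = R₁ᵀ := by
    ext i j; simp [Matrix.star_apply, Matrix.transpose_apply]
  have hstar₂ : star R₂ = R₂ᵀ := by
    ext i j; simp [Matrix.star_apply, Matrix.transpose_apply]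
  have hS : (R₁ᵀ * R₂)ᵀ * (R₁ᵀ * R₂) = 1 := by
    rw [transpose_mul, transpose_transpose, Matrix.mul_assoc,
      ← Matrix.mul_assoc R₁ R₁ᵀ R₂, ho₁, Matrix.one_mul, ho₂]
  have hdS : (R₁ᵀ * R₂).det = 1 := by
    rw [det_mul, det_transpose, hd₁, hd₂, one_mul]
  have hSne : R₁ᵀ * R₂ ≠ 1 := by
    intro h
    apply hne
    have h2 : R₁ * (R₁ᵀ * R₂) = R₂ := by
      rw [← Matrix.mul_assoc, ho₁, Matrix.one_mul]
    rw [h, Matrix.mul_one] at h2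
    exact h2
  have hfact : R₁ - R₂ = R₁ * (1 - R₁ᵀ * R₂) := by
    rw [mul_sub, mul_one, ← Matrix.mul_assoc, ho₁, Matrix.one_mul]
  have hrank : (R₁ - R₂).rank = (1 - R₁ᵀ * R₂).rank := by
    rw [hfact]
    exact Matrix.rank_mul_eq_right_of_isUnit_det R₁ _ (by rw [hd₁]; exact isUnit_one)
  rw [hrank, aux_rank_one_sub _ hS hdS hSne]
  norm_num
end

section
/- Let U ∈ ℝ^{3×3} be symmetric and positive definite and W frame indifferent, C² near SO(3)·U, and minimized on SO(3)·U. Let Q(A) = D²W(U)[A,A]. Then for every A ∈ ℝ^{3×3}, Q(A) = Q(sym(A U⁻¹) U) = Q(U⁻¹ sym(U A)). -/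
open Matrix

attribute [local instance] Matrix.frobeniusNormedAddCommGroup Matrix.frobeniusNormedSpace

noncomputable def symPart (A : Matrix (Fin 3) (Fin 3) ℝ) : Matrix (Fin 3) (Fin 3) ℝ :=
  (1 / 2 : ℝ) • (A + Aᵀ)

/-- The energy well `SO(3)·U`. -/
def well (U : Matrix (Fin 3) (Fin 3) ℝ) : Set (Matrix (Fin 3) (Fin 3) ℝ) :=
  {F | ∃ R ∈ Matrix.specialOrthogonalGroup (Fin 3) ℝ, F = R * U}

section Aux

open NormedSpace


local notation "E3" => Matrix (Fin 3) (Fin 3) ℝ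

lemma exp_mem_SO (K : E3) (hK : Kᵀ = -K) (t : ℝ) :
    exp (t • K) ∈ Matrix.specialOrthogonalGroup (Fin 3) ℝ := by
  have hstar : ∀ A : E3, star A = Aᵀ := fun A => by
    ext i j; simp [Matrix.star_apply]
  have hco : ∀ s : ℝ, star (exp (s • K)) * exp (s • K) = 1 := by
    intro s
    rw [hstar, ← Matrix.exp_transpose, transpose_smul, hK, smul_neg]
    rw [← Matrix.exp_add_of_commute _ _ (Commute.neg_left (Commute.refl (s • K)))]
    simp [exp_zero]
  refine Matrix.mem_specialOrthogonalGroup_iff.mpr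
    ⟨(Matrix.mem_orthogonalGroup_iff' (Fin 3) ℝ).mpr (hco t), ?_⟩
  have hsq : exp (t • K) = exp ((t/2) • K) * exp ((t/2) • K) := by
    rw [← Matrix.exp_add_of_commute _ _ (Commute.refl ((t/2) • K))]
    congr 1
    rw [← add_smul]; norm_num
  have h1 : (exp (t • K)).det * (exp (t • K)).det = 1 := by
    have := congrArg Matrix.det (hco t)
    rwa [Matrix.det_mul, hstar, Matrix.det_transpose, Matrix.det_one] at this
  have h2 : 0 ≤ (exp (t • K)).det := by
    rw [hsq, Matrix.det_mul]; exact mul_self_nonneg _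
  nlinarith

lemma second_deriv_along (W : E3 → ℝ) (V : Set E3) (hV : IsOpen V) (hWV : ContDiffOn ℝ 2 W V)
    (U : E3) (hU : U ∈ V) (hf0 : fderiv ℝ W U = 0)
    (c c' : ℝ → E3) (A : E3) {A₂ : E3} (hc : ∀ t, HasDerivAt c (c' t) t)
    (hc' : HasDerivAt c' A₂ 0) (hc0 : c 0 = U) (hc'0 : c' 0 = A) :
    deriv (deriv (W ∘ c)) 0 = fderiv ℝ (fderiv ℝ W) U A A := by
  set H := fderiv ℝ (fderiv ℝ W) U with hH
  have hWU : ContDiffAt ℝ 2 W U := hWV.contDiffAt (hV.mem_nhds hU)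
  have hfC := hWU.fderiv_right (m := 1) (by norm_num)
  have hfH : HasFDerivAt (fderiv ℝ W) H U :=
    (hfC.differentiableAt one_ne_zero).hasFDerivAt
  have hmemV : ∀ᶠ t in nhds (0 : ℝ), c t ∈ V := by
    have : ContinuousAt c 0 := (hc 0).continuousAt
    have hV0 : V ∈ nhds (c 0) := hV.mem_nhds (hc0 ▸ hU)
    exact this hV0
  have hEv : ∀ᶠ t in nhds (0 : ℝ), deriv (W ∘ c) t = fderiv ℝ W (c t) (c' t) := by
    filter_upwards [hmemV] with t ht
    have hWt : DifferentiableAt ℝ W (c t) :=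
      (hWV.contDiffAt (hV.mem_nhds ht)).differentiableAt (by norm_num)
    exact (hWt.hasFDerivAt.comp_hasDerivAt t (hc t)).deriv
  have hfH' : HasFDerivAt (fderiv ℝ W) H (c 0) := hc0 ▸ hfH
  have h1 : HasDerivAt (fun t => fderiv ℝ W (c t)) (H A) 0 := by
    letI : NormedAddCommGroup (E3 →L[ℝ] ℝ) := ContinuousLinearMap.toNormedAddCommGroup
    letI : NormedSpace ℝ (E3 →L[ℝ] ℝ) := ContinuousLinearMap.toNormedSpace
    have := hfH'.comp_hasDerivAt 0 (hc 0)
    rwa [hc'0] at this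
  have h2 : HasDerivAt (fun t => fderiv ℝ W (c t) (c' t)) (H A (c' 0) + (fderiv ℝ W (c 0)) A₂) 0 :=
    h1.clm_apply hc'
  rw [hc0, hf0, hc'0] at h2
  simp only [ContinuousLinearMap.zero_apply, add_zero] at h2
  rw [Filter.EventuallyEq.deriv_eq hEv, h2.deriv]

lemma key_invariance (W : E3 → ℝ) (V : Set E3) (hV : IsOpen V) (hWV : ContDiffOn ℝ 2 W V)
    (U : E3) (hU : U ∈ V) (hf0 : fderiv ℝ W U = 0)
    (hframe : ∀ R ∈ Matrix.specialOrthogonalGroup (Fin 3) ℝ, ∀ F : E3, W (R * F) = W F)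
    (K M : E3) (hK : Kᵀ = -K) :
    fderiv ℝ (fderiv ℝ W) U (K * U + M) (K * U + M) = fderiv ℝ (fderiv ℝ W) U M M := by
  have hc1 : ∀ t : ℝ, HasDerivAt (fun s : ℝ => U + s • M) M t := fun t => by
    have h := ((hasDerivAt_id t).smul_const M).const_add U
    simp only [id, one_smul] at h
    exact h
  have e1 : deriv (deriv (W ∘ fun s : ℝ => U + s • M)) 0 = fderiv ℝ (fderiv ℝ W) U M M :=
    second_deriv_along W V hV hWV U hU hf0 (fun s : ℝ => U + s • M) (fun _ => M) M (A₂ := 0) hc1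
      (hasDerivAt_const 0 M) (by simp) rfl
  set c₂ : ℝ → E3 := fun t => exp (t • K) * (U + t • M) with hc₂def
  set c₂' : ℝ → E3 := fun t => exp (t • K) * K * (U + t • M) + exp (t • K) * M with hc₂'def
  have hc2 : ∀ t : ℝ, HasDerivAt c₂ (c₂' t) t := fun t => by
    letI : NormedRing E3 := Matrix.frobeniusNormedRing
    letI : NormedAlgebra ℝ E3 := Matrix.frobeniusNormedAlgebra
    exact (hasDerivAt_exp_smul_const K t).mul (hc1 t)
  have hc2' : HasDerivAt c₂'
      ((exp ((0:ℝ) • K) * K * K * (U + (0:ℝ) • M) + exp ((0:ℝ) • K) * K * M)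
        + exp ((0:ℝ) • K) * K * M) 0 := by
    letI : NormedRing E3 := Matrix.frobeniusNormedRing
    letI : NormedAlgebra ℝ E3 := Matrix.frobeniusNormedAlgebra
    exact (((hasDerivAt_exp_smul_const K 0).mul_const K).mul (hc1 0)).add
      ((hasDerivAt_exp_smul_const K 0).mul_const M)
  have hc20 : c₂ 0 = U := by simp [hc₂def, exp_zero]
  have hc2'0 : c₂' 0 = K * U + M := by simp [hc₂'def, exp_zero]
  have e2 : deriv (deriv (W ∘ c₂)) 0 = fderiv ℝ (fderiv ℝ W) U (K * U + M) (K * U + M) :=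
    second_deriv_along W V hV hWV U hU hf0 c₂ c₂' (K * U + M) hc2 hc2' hc20 hc2'0
  have hfun : (W ∘ c₂) = (W ∘ fun s : ℝ => U + s • M) := by
    funext t
    exact hframe _ (exp_mem_SO K hK t) _
  rw [← e2, hfun, e1]

end Aux

/-- Symmetry property of the quadratic form `Q(A) = D²W(U)[A,A]` for a frame indifferent `W`,
`C²` near `SO(3)·U` and minimized (with value `0`) exactly on `SO(3)·U`:
`Q(A) = Q(sym(AU⁻¹)U) = Q(U⁻¹ sym(UA))`. -/
theorem symmetry_second_derivative
    (U : Matrix (Fin 3) (Fin 3) ℝ) (hsymm : U.IsSymm) (hpos : U.PosDef)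
    (W : Matrix (Fin 3) (Fin 3) ℝ → ℝ)
    (hframe : ∀ R ∈ Matrix.specialOrthogonalGroup (Fin 3) ℝ,
      ∀ F : Matrix (Fin 3) (Fin 3) ℝ, W (R * F) = W F)
    (hreg : ∃ V : Set (Matrix (Fin 3) (Fin 3) ℝ), IsOpen V ∧ well U ⊆ V ∧ ContDiffOn ℝ 2 W V)
    (hnonneg : ∀ F, 0 ≤ W F)
    (hmin : ∀ F, W F = 0 ↔ F ∈ well U) :
    ∀ A : Matrix (Fin 3) (Fin 3) ℝ,
      iteratedFDeriv ℝ 2 W U ![A, A] =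
        iteratedFDeriv ℝ 2 W U ![symPart (A * U⁻¹) * U, symPart (A * U⁻¹) * U] ∧
      iteratedFDeriv ℝ 2 W U ![A, A] =
        iteratedFDeriv ℝ 2 W U ![U⁻¹ * symPart (U * A), U⁻¹ * symPart (U * A)] := by
  obtain ⟨V, hV, hwellV, hWV⟩ := hreg
  have hdet : IsUnit U.det := hpos.det_pos.ne'.isUnit
  have hUwell : U ∈ well U := ⟨1, Submonoid.one_mem _, (one_mul U).symm⟩
  have hUV : U ∈ V := hwellV hUwell
  have hWU0 : W U = 0 := (hmin U).mpr hUwell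
  have hf0 : fderiv ℝ W U = 0 := by
    have hloc : IsLocalMin W U := Filter.Eventually.of_forall fun x => hWU0 ▸ hnonneg x
    exact hloc.fderiv_eq_zero
  intro A
  -- key matrix algebra
  have hUsy : Uᵀ = U := hsymm
  have hKsymm : (A * U⁻¹ - symPart (A * U⁻¹))ᵀ = -(A * U⁻¹ - symPart (A * U⁻¹)) := by
    unfold symPart
    rw [Matrix.transpose_sub, Matrix.transpose_smul, Matrix.transpose_add,
      Matrix.transpose_transpose]
    module
  have hKU : (A * U⁻¹ - symPart (A * U⁻¹)) * U + symPart (A * U⁻¹) * U = A := by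
    rw [Matrix.sub_mul, Matrix.nonsing_inv_mul_cancel_right U A hdet, sub_add_cancel]
  have hinvT : (U⁻¹)ᵀ = U⁻¹ := by rw [Matrix.transpose_nonsing_inv, hUsy]
  have hsecond : U⁻¹ * symPart (U * A) = symPart (A * U⁻¹) * U := by
    unfold symPart
    rw [Matrix.mul_smul, Matrix.smul_mul]
    congr 1
    rw [Matrix.mul_add, Matrix.add_mul, Matrix.transpose_mul, Matrix.transpose_mul, hUsy, hinvT,
      Matrix.nonsing_inv_mul_cancel_left U A hdet, Matrix.nonsing_inv_mul_cancel_right U A hdet,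
      Matrix.mul_assoc]
  have hQ : ∀ X Y : Matrix (Fin 3) (Fin 3) ℝ,
      iteratedFDeriv ℝ 2 W U ![X, Y] = fderiv ℝ (fderiv ℝ W) U X Y := by
    intro X Y
    rw [iteratedFDeriv_two_apply]
    simp
    rfl
  have hmain : iteratedFDeriv ℝ 2 W U ![A, A] =
      iteratedFDeriv ℝ 2 W U ![symPart (A * U⁻¹) * U, symPart (A * U⁻¹) * U] := by
    rw [hQ, hQ]
    have := key_invariance W V hV hWV U hUV hf0 hframe
      (A * U⁻¹ - symPart (A * U⁻¹)) (symPart (A * U⁻¹) * U) hKsymm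
    rwa [hKU] at this
  refine ⟨hmain, ?_⟩
  rw [hsecond]
  exact hmain
end

section
/- Let U ∈ ℝ^{3×3} be symmetric and positive definite and let B be a 3×2 real matrix with BᵀB = (U²)' (the upper-left 2×2 block of U²). Define ν = (1/|U⁻¹e₃|²) [det(U⁻¹)(B e₁ × B e₂) − Σ_{k=1}² (U⁻¹e_k · U⁻¹e₃) B e_k], where B e_k denotes the k-th column of B. Then the 3×3 matrix (B|ν) satisfies (B|ν)ᵀ(B|ν) = U² and det(B|ν) > 0; in particular (B|ν)U⁻¹ ∈ SO(3). -/
open Matrix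

/-- The 3×3 matrix `(B|v)` whose first two columns are those of `B` and third column is `v`. -/
def augment (B : Matrix (Fin 3) (Fin 2) ℝ) (v : Fin 3 → ℝ) : Matrix (Fin 3) (Fin 3) ℝ :=
  Matrix.of fun i j => ![B i 0, B i 1, v i] j

/-- The explicit normal vector `ν` associated with `B` and `U`. -/
noncomputable def normalVec (U : Matrix (Fin 3) (Fin 3) ℝ) (B : Matrix (Fin 3) (Fin 2) ℝ) :
    Fin 3 → ℝ :=
  let n3 : Fin 3 → ℝ := U⁻¹ *ᵥ Pi.single 2 1
  (1 / (n3 ⬝ᵥ n3)) •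
    ((U⁻¹).det • crossProduct (fun i => B i 0) (fun i => B i 1) -
      ∑ k : Fin 2, ((U⁻¹ *ᵥ Pi.single k.castSucc 1) ⬝ᵥ n3) • (fun i => B i k))

set_option maxHeartbeats 2000000 in
/-- If `BᵀB = (U²)'`, then with `ν` given by the explicit formula, `(B|ν)ᵀ(B|ν) = U²`,
`det (B|ν) > 0`, and `(B|ν)U⁻¹ ∈ SO(3)`. -/
theorem augment_normal_isometry (U : Matrix (Fin 3) (Fin 3) ℝ)
    (hsymm : U.IsSymm) (hpos : U.PosDef)
    (B : Matrix (Fin 3) (Fin 2) ℝ)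
    (hB : ∀ i j : Fin 2, (Bᵀ * B) i j = (U * U) i.castSucc j.castSucc) :
    (augment B (normalVec U B))ᵀ * augment B (normalVec U B) = U * U ∧
    0 < (augment B (normalVec U B)).det ∧
    augment B (normalVec U B) * U⁻¹ ∈ Matrix.specialOrthogonalGroup (Fin 3) ℝ := by
  have hDpos : 0 < U.det := hpos.det_pos
  have hUU : IsUnit U.det := isUnit_iff_ne_zero.mpr hDpos.ne'
  have hVt : (U⁻¹)ᵀ = U⁻¹ := by rw [Matrix.transpose_nonsing_inv, hsymm]
  have hd : (U⁻¹).det * U.det = 1 := Matrix.det_nonsing_inv_mul_det U hUU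
  have hVU : U⁻¹ * U = 1 := Matrix.nonsing_inv_mul U hUU
  have hUV : U * U⁻¹ = 1 := Matrix.mul_nonsing_inv U hUU
  set V : Matrix (Fin 3) (Fin 3) ℝ := U⁻¹ with hVdef
  set N : Matrix (Fin 3) (Fin 3) ℝ := V * V with hNdef
  set W : Matrix (Fin 3) (Fin 3) ℝ := U * U with hWdef
  have hNW : N * W = 1 := by
    calc N * W = V * ((V * U) * U) := by simp [hNdef, hWdef, Matrix.mul_assoc]
    _ = 1 := by rw [hVU, Matrix.one_mul, hVU]
  have hWN : W * N = 1 := by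
    calc W * N = U * ((U * V) * V) := by simp [hNdef, hWdef, Matrix.mul_assoc]
    _ = 1 := by rw [hUV, Matrix.one_mul, hUV]
  have hNinv : N = W⁻¹ := by rw [hWdef, Matrix.mul_inv_rev]
  have hdetW : W.det = U.det * U.det := Matrix.det_mul U U
  have hdetWne : W.det ≠ 0 := by rw [hdetW]; positivity
  have hcof : W 0 0 * W 1 1 - W 0 1 * W 1 0 = W.det * N 2 2 := by
    have h1 : N 2 2 = Ring.inverse W.det * adjugate W 2 2 := by
      rw [hNinv, Matrix.inv_def]; simp
    rw [h1, adjugate_fin_three]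
    rw [Ring.inverse_eq_inv']
    field_simp
    rfl
  have hdot : ∀ k l : Fin 3, (V *ᵥ Pi.single k 1) ⬝ᵥ (V *ᵥ Pi.single l 1) = N k l := by
    intro k l
    conv_rhs => rw [hNdef, show V * V = Vᵀ * V from by rw [hVt]]
    simp [mulVec_single, dotProduct, Matrix.mul_apply, transpose_apply]
  have hnu : ∀ i, normalVec U B i = (N 2 2)⁻¹ *
      (V.det * (crossProduct (fun i => B i 0) (fun i => B i 1) : Fin 3 → ℝ) i
        - N 0 2 * B i 0 - N 1 2 * B i 1) := by
    intro i
    simp only [normalVec, Fin.sum_univ_two]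
    rw [show ((U⁻¹ *ᵥ Pi.single 2 1) ⬝ᵥ (U⁻¹ *ᵥ Pi.single 2 1)) = N 2 2 from hdot 2 2,
      show ((U⁻¹ *ᵥ Pi.single ((0 : Fin 2).castSucc) 1) ⬝ᵥ (U⁻¹ *ᵥ Pi.single 2 1)) = N 0 2 from by
        simpa using hdot 0 2,
      show ((U⁻¹ *ᵥ Pi.single ((1 : Fin 2).castSucc) 1) ⬝ᵥ (U⁻¹ *ᵥ Pi.single 2 1)) = N 1 2 from by
        simpa using hdot 1 2]
    simp only [Pi.smul_apply, Pi.sub_apply, Pi.add_apply, smul_eq_mul, one_div]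
    ring
  -- scalar equations
  have entry : ∀ (M : Matrix (Fin 3) (Fin 3) ℝ) (i j : Fin 3),
      (M * W) i j = M i 0 * W 0 j + M i 1 * W 1 j + M i 2 * W 2 j := by
    intro M i j; rw [Matrix.mul_apply, Fin.sum_univ_three]
  have hR0 : N 2 0 * W 0 0 + N 2 1 * W 1 0 + N 2 2 * W 2 0 = 0 := by
    have := congrFun (congrFun hNW 2) 0
    rw [entry] at this; simpa using this
  have hR1 : N 2 0 * W 0 1 + N 2 1 * W 1 1 + N 2 2 * W 2 1 = 0 := by
    have := congrFun (congrFun hNW 2) 1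
    rw [entry] at this; simpa using this
  have hR2 : N 2 0 * W 0 2 + N 2 1 * W 1 2 + N 2 2 * W 2 2 = 1 := by
    have := congrFun (congrFun hNW 2) 2
    rw [entry] at this; simpa using this
  have hWt : Wᵀ = W := by rw [hWdef, Matrix.transpose_mul, hsymm]
  have hNt : Nᵀ = N := by rw [hNdef, Matrix.transpose_mul, hVt]
  have hw10 : W 1 0 = W 0 1 := by have := congrFun (congrFun hWt 0) 1; simpa using this
  have hw20 : W 2 0 = W 0 2 := by have := congrFun (congrFun hWt 0) 2; simpa using this
  have hw21 : W 2 1 = W 1 2 := by have := congrFun (congrFun hWt 1) 2; simpa using this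
  have hn20 : N 2 0 = N 0 2 := by have := congrFun (congrFun hNt 0) 2; simpa using this
  have hn21 : N 2 1 = N 1 2 := by have := congrFun (congrFun hNt 1) 2; simpa using this
  have hGram : ∀ i j : Fin 2,
      B 0 i * B 0 j + B 1 i * B 1 j + B 2 i * B 2 j = W i.castSucc j.castSucc := by
    intro i j
    have := hB i j
    rw [Matrix.mul_apply, Fin.sum_univ_three] at this
    simpa [transpose_apply] using this
  have hG00 := hGram 0 0
  have hG01 := hGram 0 1
  have hG11 := hGram 1 1
  simp only [show ((0:Fin 2).castSucc) = (0:Fin 3) from rfl,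
    show ((1:Fin 2).castSucc) = (1:Fin 3) from rfl] at hG00 hG01 hG11
  -- s ≠ 0
  have hNe : N 2 2 = V 0 2 ^ 2 + V 1 2 ^ 2 + V 2 2 ^ 2 := by
    rw [← hdot 2 2]
    simp [mulVec_single, dotProduct, Fin.sum_univ_three]
    ring
  have hs : N 2 2 ≠ 0 := by
    intro h0
    rw [hNe] at h0
    have h02 : V 0 2 = 0 := by nlinarith [sq_nonneg (V 0 2), sq_nonneg (V 1 2), sq_nonneg (V 2 2)]
    have h12 : V 1 2 = 0 := by nlinarith [sq_nonneg (V 0 2), sq_nonneg (V 1 2), sq_nonneg (V 2 2)]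
    have h22 : V 2 2 = 0 := by nlinarith [sq_nonneg (V 0 2), sq_nonneg (V 1 2), sq_nonneg (V 2 2)]
    have h1 : ((W * N) 2 2 : ℝ) = 1 := by rw [hWN]; simp
    rw [hNdef] at h1
    simp [Matrix.mul_apply, Fin.sum_univ_three, h02, h12, h22] at h1
  have hR0' : N 0 2 * W 0 0 + N 1 2 * W 0 1 + N 2 2 * W 0 2 = 0 := by
    rw [hn20, hn21, hw10, hw20] at hR0; exact hR0
  have hR1' : N 0 2 * W 0 1 + N 1 2 * W 1 1 + N 2 2 * W 1 2 = 0 := by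
    rw [hn20, hn21, hw21] at hR1; exact hR1
  have hR2' : N 0 2 * W 0 2 + N 1 2 * W 1 2 + N 2 2 * W 2 2 = 1 := by
    rw [hn20, hn21] at hR2; exact hR2
  -- Part 1: Gram identity
  have part1 : (augment B (normalVec U B))ᵀ * augment B (normalVec U B) = W := by
    ext i j
    rw [Matrix.mul_apply, Fin.sum_univ_three]
    simp only [augment, transpose_apply, Matrix.of_apply]
    fin_cases i <;> fin_cases j <;>
      simp only [Fin.reduceFinMk, Fin.isValue, Matrix.cons_val_zero, Matrix.cons_val_one,
        Matrix.head_cons, Matrix.cons_val_two, Matrix.tail_cons, hnu, cross_apply]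
    · exact hG00
    · exact hG01
    · field_simp
      linear_combination (-(N 0 2)) * hG00 - N 1 2 * hG01 - hR0'
    · rw [hw10]; linear_combination hG01
    · exact hG11
    · field_simp
      linear_combination (-(N 0 2)) * hG01 - N 1 2 * hG11 - hR1'
    · field_simp
      linear_combination (-(N 0 2)) * hG00 - N 1 2 * hG01 - hR0' - N 2 2 * hw20
    · field_simp
      linear_combination (-(N 0 2)) * hG01 - N 1 2 * hG11 - hR1' - N 2 2 * hw21
    · field_simp
      linear_combination V.det ^ 2 * (((B 0 1 * B 0 1 + B 1 1 * B 1 1 + B 2 1 * B 2 1) * hG00 + W 0 0 * hG11 - (B 0 0 * B 0 1 + B 1 0 * B 1 1 + B 2 0 * B 2 1) * hG01 - W 0 1 * hG01 + W 0 1 * hw10) + hcof + N 2 2 * hdetW) + N 2 2 * (V.det * U.det + 1) * hd + N 0 2 ^ 2 * hG00 + 2 * N 0 2 * N 1 2 * hG01 + N 1 2 ^ 2 * hG11 + N 0 2 * hR0' + N 1 2 * hR1' - N 2 2 * hR2'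
  have hdetA : (augment B (normalVec U B)).det = U.det := by
    rw [Matrix.det_fin_three]
    simp only [augment, Matrix.of_apply, Matrix.cons_val_zero, Matrix.cons_val_one,
      Matrix.head_cons, Matrix.cons_val_two, Matrix.tail_cons, hnu, cross_apply, Fin.isValue]
    field_simp
    linear_combination V.det * (((B 0 1 * B 0 1 + B 1 1 * B 1 1 + B 2 1 * B 2 1) * hG00 + W 0 0 * hG11 - (B 0 0 * B 0 1 + B 1 0 * B 1 1 + B 2 0 * B 2 1) * hG01 - W 0 1 * hG01 + W 0 1 * hw10) + hcof + N 2 2 * hdetW) + N 2 2 * U.det * hd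
  refine ⟨part1, by rw [hdetA]; exact hDpos, ?_⟩
  rw [Matrix.mem_specialOrthogonalGroup_iff]
  constructor
  · rw [Matrix.mem_orthogonalGroup_iff']
    have hstar : star (augment B (normalVec U B) * V) = (augment B (normalVec U B) * V)ᵀ := by
      ext i j
      simp [Matrix.star_apply]
    rw [Matrix.transpose_mul, hVt, Matrix.mul_assoc, ← Matrix.mul_assoc
      (augment B (normalVec U B))ᵀ, part1, hWdef, ← Matrix.mul_assoc, ← Matrix.mul_assoc,
      hVU, Matrix.one_mul, hUV]
  · rw [Matrix.det_mul, hdetA]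
    linear_combination hd
end

section
/- Let U ∈ ℝ^{3×3} be symmetric positive definite, v ∈ ℝ², and let A ∈ ℝ^{3×3} be skew-symmetric with UAU = e₃ ⊗ (v,0) − (v,0) ⊗ e₃ (where (v,0) ∈ ℝ³ embeds v ∈ ℝ²). Then the upper-left 2×2 block of U A² U equals −|U⁻¹e₃|² · v ⊗ v, i.e., (UA²U)' = −|U⁻¹e₃|² (v ⊗ v). -/
open Matrix

/-- If `A` is skew-symmetric with `UAU = e₃ ⊗ (v,0) − (v,0) ⊗ e₃`, then
`(UA²U)' = −|U⁻¹e₃|² (v ⊗ v)`. -/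
theorem block_of_UA2U (U A : Matrix (Fin 3) (Fin 3) ℝ)
    (hsymm : U.IsSymm) (hpos : U.PosDef)
    (hskew : Aᵀ = -A)
    (v : Fin 2 → ℝ)
    (hA : U * A * U = vecMulVec (Pi.single 2 1) ![v 0, v 1, 0] -
        vecMulVec ![v 0, v 1, 0] (Pi.single 2 1)) :
    ∀ i j : Fin 2, (U * A * A * U) i.castSucc j.castSucc =
      -((U⁻¹ *ᵥ Pi.single 2 1) ⬝ᵥ (U⁻¹ *ᵥ Pi.single 2 1)) * (v i * v j) := by
  have hd : IsUnit U.det := isUnit_iff_ne_zero.mpr hpos.det_pos.ne'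
  have key : U * A * A * U = (U * A * U) * (U⁻¹ * (U⁻¹ * (U * A * U))) := by
    simp [Matrix.mul_assoc, Matrix.nonsing_inv_mul_cancel_left _ _ hd,
      Matrix.mul_nonsing_inv_cancel_left _ _ hd]
  have hinvsymm : (U⁻¹)ᵀ = U⁻¹ := by
    rw [Matrix.transpose_nonsing_inv, hsymm.eq]
  have hsy : ∀ k : Fin 3, U⁻¹ 2 k = U⁻¹ k 2 := fun k => (congrFun (congrFun hinvsymm 2) k).symm
  rw [hA] at key
  intro i j
  rw [key]
  fin_cases i <;> fin_cases j <;>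
    simp only [Matrix.mul_apply, Matrix.sub_apply, vecMulVec_apply, Fin.sum_univ_three] <;>
    simp [Matrix.mul_apply, Matrix.mulVec, dotProduct, Fin.sum_univ_three,
      vecMulVec_apply, Pi.single_apply, hsy 0, hsy 1] <;> ring
end
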